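/- arXiv:2603.09558 — 3 statements merged into one kernel-verified Lean document; each statement's English description precedes it below -/
import Mathlib

section
/- If < is a well-founded strict order on a set D, then for every natural number k, the lexicographic order on finite multisets over D of size at most k is well-founded. -/
/-- `m` is the maximum of the multiset `M`: it occurs in `M` and bounds every
element of `M`. -/
def IsMaxOf {D : Type} [PartialOrder D] (M : Multiset D) (m : D) : Prop :=
  m ∈ M ∧ ∀ x ∈ M, x ≤ m

/-- The strict lexicographic order on finite multisets over a strictly ordered
set `D`: the empty multiset is below every nonempty multiset; for nonempty
`M`, `N`, `M <_lex N` iff `max M < max N`, or `max M = max N` and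
`(M - {max M}) <_lex (N - {max N})`. -/
inductive MLex {D : Type} [PartialOrder D] [DecidableEq D] : Multiset D → Multiset D → Prop
  | empty (N : Multiset D) (h : N ≠ 0) : MLex 0 N
  | maxLt (M N : Multiset D) (m n : D) (hm : IsMaxOf M m) (hn : IsMaxOf N n)
      (h : m < n) : MLex M N
  | maxEq (M N : Multiset D) (m n : D) (hm : IsMaxOf M m) (hn : IsMaxOf N n)
      (h : m = n) (hrec : MLex (M.erase m) (N.erase n)) : MLex M N

section Aux

variable {D : Type} [PartialOrder D] [DecidableEq D]

theorem isMaxOf_unique {M : Multiset D} {m m' : D} (h : IsMaxOf M m) (h' : IsMaxOf M m') :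
    m = m' :=
  le_antisymm (h'.2 m h.1) (h.2 m' h'.1)

/-- `MLex` with a size bound on the smaller multiset. -/
def RLex (k : ℕ) (M N : Multiset D) : Prop := MLex M N ∧ Multiset.card M ≤ k

theorem acc_rlex_zero (k : ℕ) : Acc (RLex (D := D) k) 0 := by
  constructor
  rintro M ⟨hlex, -⟩
  cases hlex with
  | empty N h => exact absurd rfl h
  | maxLt M N m n hm hn h => exact absurd hn.1 (Multiset.notMem_zero n)
  | maxEq M N m n hm hn h hrec => exact absurd hn.1 (Multiset.notMem_zero n)

theorem acc_rlex (hwf : WellFounded ((· < ·) : D → D → Prop)) :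
    ∀ k : ℕ, ∀ N : Multiset D, Multiset.card N ≤ k → Acc (RLex k) N := by
  intro k
  induction k with
  | zero =>
    intro N hN
    have : N = 0 := Multiset.card_eq_zero.mp (Nat.le_zero.mp hN)
    subst this
    exact acc_rlex_zero 0
  | succ k ih =>
    have A : ∀ n : D, Acc (· < ·) n → ∀ N' : Multiset D, Acc (RLex k) N' →
        ∀ N : Multiset D, Multiset.card N ≤ k + 1 → IsMaxOf N n → N.erase n = N' →
        Acc (RLex (k + 1)) N := by
      intro n hn
      induction hn with
      | intro n _ ih1 =>
        intro N' hN'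
        induction hN' with
        | intro N' _ ih2 =>
          intro N hcard hmax herase
          constructor
          rintro M ⟨hlex, hcM⟩
          cases hlex with
          | empty _ _ => exact acc_rlex_zero _
          | maxLt M N m n' hm hn' hlt =>
            have hn'' : n' = n := isMaxOf_unique hn' hmax
            subst hn''
            have hce : Multiset.card (M.erase m) ≤ k := by
              rw [Multiset.card_erase_of_mem hm.1]; exact Nat.pred_le_pred hcM
            exact ih1 m hlt (M.erase m) (ih _ hce) M hcM hm rfl
          | maxEq M N m n' hm hn' heq hrec =>
            have hn'' : n' = n := isMaxOf_unique hn' hmax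
            subst hn''
            subst heq
            have hce : Multiset.card (M.erase m) ≤ k := by
              rw [Multiset.card_erase_of_mem hm.1]; exact Nat.pred_le_pred hcM
            subst herase
            exact ih2 (M.erase m) ⟨hrec, hce⟩ M hcM hm rfl
    intro N hN
    by_cases h0 : N = 0
    · subst h0; exact acc_rlex_zero _
    · by_cases hmax : ∃ n, IsMaxOf N n
      · obtain ⟨n, hn⟩ := hmax
        have hce : Multiset.card (N.erase n) ≤ k := by
          rw [Multiset.card_erase_of_mem hn.1]; exact Nat.pred_le_pred hN
        exact A n (hwf.apply n) (N.erase n) (ih _ hce) N hN hn rfl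
      · constructor
        rintro M ⟨hlex, -⟩
        cases hlex with
        | empty _ _ => exact acc_rlex_zero _
        | maxLt M N m n hm hn h => exact absurd ⟨n, hn⟩ hmax
        | maxEq M N m n hm hn h hrec => exact absurd ⟨n, hn⟩ hmax

theorem acc_sub {k : ℕ} {N : Multiset D} (h : Acc (RLex k) N) :
    ∀ hN : Multiset.card N ≤ k,
      Acc (fun M N : {M : Multiset D // Multiset.card M ≤ k} => MLex M.1 N.1) ⟨N, hN⟩ := by
  induction h with
  | intro N _ ih =>
    intro hN
    constructor
    rintro ⟨M, hM⟩ hlex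
    exact ih M ⟨hlex, hM⟩ hM

end Aux

/-- If `<` is a well-founded strict order on `D`, then for every natural number
`k`, the lexicographic order on finite multisets over `D` of size at most `k`
is well-founded. -/
theorem wellFounded_mlex_of_card_le {D : Type} [PartialOrder D] [DecidableEq D]
    (hwf : WellFounded ((· < ·) : D → D → Prop)) (k : ℕ) :
    WellFounded (fun M N : {M : Multiset D // Multiset.card M ≤ k} =>
      MLex M.1 N.1) := by
  constructor
  rintro ⟨N, hN⟩
  exact acc_sub (acc_rlex hwf k N hN) hN
end

section
/- For any instance J, any rule with body the trivially-true nullary fact ⊤ fires exactly once in the oblivious chase; consequently, for any rule set S and any rule ρ of the form ⊤ → J' (introducing a fresh disjoint copy of an instance J'), chase(J, S ∪ {ρ}) is homomorphically equivalent to chase(chase(J, {ρ}), S). -/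
/-! Basic framework for existential rules and the oblivious chase. -/

/-- An existential rule: body and head are finite lists of atoms over
variables (natural numbers).  Head variables not occurring in the body are
(implicitly) existentially quantified. -/
structure Rule (P : Type) where
  body : List (P × List ℕ)
  head : List (P × List ℕ)

/-- Terms of the chase: base terms, and canonical nulls `null ρ σ v`
created for the existential variable `v` by the trigger `(ρ, σ)`. -/
inductive CTerm (P : Type) where
  | base : ℕ → CTerm P
  | null : Rule P → (ℕ → CTerm P) → ℕ → CTerm P

/-- An atom over chase terms. -/
abbrev CAtom (P : Type) := P × List (CTerm P)

/-- An instance is a set of atoms. -/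
abbrev CInst (P : Type) := Set (CAtom P)

def mapAtom {P : Type} (σ : ℕ → CTerm P) (a : P × List ℕ) : CAtom P :=
  (a.1, a.2.map σ)

def bodyVars {P : Type} (ρ : Rule P) : Set ℕ := {v | ∃ a ∈ ρ.body, v ∈ a.2}

def headVars {P : Type} (ρ : Rule P) : Set ℕ := {v | ∃ a ∈ ρ.head, v ∈ a.2}

/-- A rule is Datalog iff it has no existential variables. -/
def IsDatalog {P : Type} (ρ : Rule P) : Prop := headVars ρ ⊆ bodyVars ρ

open Classical in
/-- Canonical restriction of a substitution to the body variables of a rule. -/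
noncomputable def canonSub {P : Type} (ρ : Rule P) (σ : ℕ → CTerm P) : ℕ → CTerm P :=
  fun v => if v ∈ bodyVars ρ then σ v else CTerm.base 0

open Classical in
/-- Output of the trigger `(ρ, σ)`: the head atoms, with frontier variables
mapped by `σ` and existential variables mapped to canonical fresh nulls. -/
noncomputable def triggerOut {P : Type} (ρ : Rule P) (σ : ℕ → CTerm P) : CInst P :=
  {b | ∃ a ∈ ρ.head,
    b = mapAtom (fun v => if v ∈ bodyVars ρ then σ v
                          else CTerm.null ρ (canonSub ρ σ) v) a}

/-- `(ρ, σ)` is a trigger on `I`. -/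
def bodyHolds {P : Type} (ρ : Rule P) (σ : ℕ → CTerm P) (I : CInst P) : Prop :=
  ∀ a ∈ ρ.body, mapAtom σ a ∈ I

/-- One (oblivious) chase step: apply all triggers simultaneously. -/
noncomputable def chaseStep {P : Type} (R : Set (Rule P)) (I : CInst P) : CInst P :=
  I ∪ {b | ∃ ρ ∈ R, ∃ σ, bodyHolds ρ σ I ∧ b ∈ triggerOut ρ σ}

/-- The result of the oblivious chase of `I` with the rule set `R`. -/
noncomputable def chase {P : Type} (R : Set (Rule P)) (I : CInst P) : CInst P :=
  ⋃ n, (chaseStep R)^[n] I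

/-- Active domain of an instance. -/
def termsOf {P : Type} (I : CInst P) : Set (CTerm P) := {t | ∃ a ∈ I, t ∈ a.2}

def mapTAtom {P : Type} (h : CTerm P → CTerm P) (a : CAtom P) : CAtom P := (a.1, a.2.map h)

/-- `h` is a homomorphism from `I` to `J`. -/
def IsHom {P : Type} (h : CTerm P → CTerm P) (I J : CInst P) : Prop :=
  ∀ a ∈ I, mapTAtom h a ∈ J

/-- Homomorphic equivalence of instances. -/
def HomEquiv {P : Type} (I J : CInst P) : Prop :=
  (∃ h, IsHom h I J) ∧ (∃ h, IsHom h J I)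

/-- A conjunctive query: a list of atoms together with the tuple of answer variables. -/
abbrev CQuery (P : Type) := List (P × List ℕ) × List ℕ

/-- Entailment of a CQ for an answer tuple `t`. -/
def cqSat {P : Type} (I : CInst P) (q : CQuery P) (t : List (CTerm P)) : Prop :=
  ∃ σ : ℕ → CTerm P, (∀ a ∈ q.1, mapAtom σ a ∈ I) ∧ q.2.map σ = t

/-- Entailment of a UCQ (a finite disjunction, given as a list, of CQs). -/
def ucqSat {P : Type} (I : CInst P) (Q : List (CQuery P)) (t : List (CTerm P)) : Prop :=
  ∃ q ∈ Q, cqSat I q t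

/-- A rule set is UCQ-rewritable if every CQ admits a UCQ rewriting valid over
all instances and all answer tuples from the active domain. -/
def UCQRewritable {P : Type} (R : Set (Rule P)) : Prop :=
  ∀ q : CQuery P, ∃ Q : List (CQuery P), ∀ (I : CInst P) (t : List (CTerm P)),
    (∀ x ∈ t, x ∈ termsOf I) → (cqSat (chase R I) q t ↔ ucqSat I Q t)


section TopAux
variable {P : Type}

lemma chaseStep_superset (R : Set (Rule P)) (I : CInst P) : I ⊆ chaseStep R I :=
  Set.subset_union_left

lemma chaseStep_mono (R : Set (Rule P)) {I I' : CInst P} (h : I ⊆ I') :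
    chaseStep R I ⊆ chaseStep R I' := by
  intro b hb
  cases hb with
  | inl hb => exact Or.inl (h hb)
  | inr hb =>
    obtain ⟨ρ, hρ, σ, hσ, hout⟩ := hb
    exact Or.inr ⟨ρ, hρ, σ, fun a ha => h (hσ a ha), hout⟩

lemma chaseStep_mono_rules {R R' : Set (Rule P)} (h : R ⊆ R') (I : CInst P) :
    chaseStep R I ⊆ chaseStep R' I := by
  intro b hb
  cases hb with
  | inl hb => exact Or.inl hb
  | inr hb =>
    obtain ⟨ρ, hρ, σ, hσ, hout⟩ := hb
    exact Or.inr ⟨ρ, h hρ, σ, hσ, hout⟩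

lemma iterate_superset (R : Set (Rule P)) (I : CInst P) (n : ℕ) :
    I ⊆ (chaseStep R)^[n] I := by
  induction n with
  | zero => simp
  | succ n ih =>
    rw [Function.iterate_succ_apply']
    exact ih.trans (chaseStep_superset R _)

lemma isHom_id (I : CInst P) : IsHom id I I := by
  intro a ha
  simpa [mapTAtom] using ha

end TopAux

/-- A rule whose body is the trivially-true nullary fact `⊤` (the atom
`(tp, [])`) fires exactly once in the oblivious chase: all its triggers have
the same output.  Consequently, for any rule set `S` and any rule
`ρ = ⊤ → J'`, `chase(J, S ∪ {ρ})` is homomorphically equivalent to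
`chase(chase(J, {ρ}), S)`. -/
theorem top_rule_fires_once {P : Type} (tp : P) (S : Set (Rule P))
    (J' : List (P × List ℕ)) (J : CInst P)
    (hTop : (tp, ([] : List (CTerm P))) ∈ J) :
    (∀ σ σ' : ℕ → CTerm P,
        triggerOut (Rule.mk [(tp, [])] J') σ = triggerOut (Rule.mk [(tp, [])] J') σ') ∧
    HomEquiv (chase (S ∪ {Rule.mk [(tp, [])] J'}) J)
      (chase S (chase {Rule.mk [(tp, [])] J'} J)) := by
  classical
  set ρ : Rule P := Rule.mk [(tp, [])] J' with hρdef
  have hbv : ∀ v, v ∉ bodyVars ρ := by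
    intro v hv
    obtain ⟨a, ha, hva⟩ := hv
    simp only [hρdef, List.mem_singleton] at ha
    subst ha
    simp at hva
  have hcanon : ∀ σ : ℕ → CTerm P, canonSub ρ σ = fun _ => CTerm.base 0 := by
    intro σ; funext v; simp [canonSub, hbv v]
  set ν : ℕ → CTerm P := fun v => CTerm.null ρ (fun _ => CTerm.base 0) v with hν
  set T : CInst P := {b | ∃ a ∈ J', b = mapAtom ν a} with hT
  have htrig : ∀ σ : ℕ → CTerm P, triggerOut ρ σ = T := by
    intro σ
    have hf : (fun v => if v ∈ bodyVars ρ then σ v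
        else CTerm.null ρ (canonSub ρ σ) v) = ν := by
      funext v; rw [if_neg (hbv v), hcanon σ]
    simp only [triggerOut, hf]
    rfl
  have hfire : ∀ σ σ' : ℕ → CTerm P, triggerOut ρ σ = triggerOut ρ σ' := by
    intro σ σ'; rw [htrig σ, htrig σ']
  refine ⟨hfire, ?_⟩
  -- bodyHolds for ρ holds whenever (tp,[]) ∈ I
  have hbody : ∀ (σ : ℕ → CTerm P) (I : CInst P), (tp, ([] : List (CTerm P))) ∈ I →
      bodyHolds ρ σ I := by
    intro σ I hI a ha
    simp only [hρdef, List.mem_singleton] at ha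
    subst ha
    simpa [mapAtom] using hI
  -- T is included in any chase step over a rule set containing ρ
  have hTstep : ∀ (R : Set (Rule P)) (I : CInst P), ρ ∈ R →
      (tp, ([] : List (CTerm P))) ∈ I → T ⊆ chaseStep R I := by
    intro R I hρR hI b hb
    exact Or.inr ⟨ρ, hρR, ν, hbody ν I hI, by rw [htrig ν]; exact hb⟩
  -- chase {ρ} J = J ∪ T
  have hchase1 : chase {ρ} J = J ∪ T := by
    apply Set.Subset.antisymm
    · intro b hb
      obtain ⟨s, ⟨n, rfl⟩, hbs⟩ := hb
      induction n generalizing b with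
      | zero => exact Or.inl hbs
      | succ n ih =>
        simp only [Function.iterate_succ_apply'] at hbs
        cases hbs with
        | inl h => exact ih h
        | inr h =>
          obtain ⟨ρ', hρ', σ, _, hout⟩ := h
          rw [Set.mem_singleton_iff] at hρ'
          subst hρ'
          rw [htrig σ] at hout
          exact Or.inr hout
    · intro b hb
      cases hb with
      | inl h => exact Set.mem_iUnion.2 ⟨0, h⟩
      | inr h =>
        refine Set.mem_iUnion.2 ⟨1, ?_⟩
        exact hTstep {ρ} J rfl hTop h
  -- main set equality
  have hA : ∀ n, (chaseStep (S ∪ {ρ}))^[n] J ⊆ (chaseStep S)^[n] (J ∪ T) := by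
    intro n
    induction n with
    | zero => exact Set.subset_union_left
    | succ n ih =>
      rw [Function.iterate_succ_apply', Function.iterate_succ_apply']
      intro b hb
      cases hb with
      | inl h => exact chaseStep_superset S _ (ih h)
      | inr h =>
        obtain ⟨ρ', hρ', σ, hbd, hout⟩ := h
        cases hρ' with
        | inl hρS =>
          exact Or.inr ⟨ρ', hρS, σ, fun a ha => ih (hbd a ha), hout⟩
        | inr hρρ =>
          rw [Set.mem_singleton_iff] at hρρ
          subst hρρ
          rw [htrig σ] at hout
          exact chaseStep_superset S _
            (iterate_superset S (J ∪ T) n (Or.inr hout))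
  have hTopIter : ∀ n, (tp, ([] : List (CTerm P))) ∈ (chaseStep (S ∪ {ρ}))^[n] J :=
    fun n => iterate_superset _ J n hTop
  have hB : ∀ n, (chaseStep S)^[n] (J ∪ T) ⊆ (chaseStep (S ∪ {ρ}))^[n+1] J := by
    intro n
    induction n with
    | zero =>
      intro b hb
      cases hb with
      | inl h => exact chaseStep_superset _ J h
      | inr h => exact hTstep (S ∪ {ρ}) J (Or.inr rfl) hTop h
    | succ n ih =>
      rw [Function.iterate_succ_apply', Function.iterate_succ_apply'
        (chaseStep (S ∪ {ρ})) (n+1) J]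
      exact (chaseStep_mono S ih).trans
        (chaseStep_mono_rules Set.subset_union_left _)
  have heq : chase (S ∪ {ρ}) J = chase S (chase {ρ} J) := by
    rw [hchase1]
    apply Set.Subset.antisymm
    · intro b hb
      obtain ⟨s, ⟨n, rfl⟩, hbs⟩ := hb
      exact Set.mem_iUnion.2 ⟨n, hA n hbs⟩
    · intro b hb
      obtain ⟨s, ⟨n, rfl⟩, hbs⟩ := hb
      exact Set.mem_iUnion.2 ⟨n + 1, hB n hbs⟩
  exact ⟨⟨id, heq ▸ isHom_id _⟩, ⟨id, heq ▸ isHom_id _⟩⟩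
end

section
/- Let C be a directed acyclic instance over binary predicates with the predecessor-uniqueness property (each vertex has at most one incoming edge per predicate). Let q(x, y_1, ..., y_m) be a connected CQ over binary predicates such that in the DAG order of q, each y_j is strictly below x (there is a directed path from y_j to x in q). Then the relation {(s, t_1, ..., t_m) : C ⊨ q(s, t_1, ..., t_m)} is the graph of a partial function from s to (t_1,...,t_m): for each s there is at most one tuple (t_1,...,t_m). -/
/-- Let `C` be a directed acyclic edge-labeled graph (`edge`) with the
predecessor-uniqueness property, and let `q` be a connected DAG-shaped CQ over
binary predicates (atom relation `qa`, on a variable type `Var`) with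
distinguished variables `x` and `y 0, ..., y (m-1)`, each `y j` strictly below
`x` in the DAG order of `q`.  Then the answers to `q` form the graph of a
partial function from the image of `x` to the tuple of images of the `y j`:
any two homomorphisms of `q` into `C` agreeing on `x` agree on every `y j`. -/
theorem cq_functional {V Pr Var : Type} (edge : Pr → V → V → Prop)
    (hacyc : ∀ v : V, ¬ Relation.TransGen (fun a b => ∃ A, edge A a b) v v)
    (huniq : ∀ (A : Pr) (u t t' : V), edge A t u → edge A t' u → t = t')
    (qa : Pr → Var → Var → Prop) (x : Var) (m : ℕ) (y : Fin m → Var)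
    (hqdag : ∀ v : Var, ¬ Relation.TransGen (fun a b => ∃ A, qa A a b) v v)
    (hconn : ∀ u v : Var,
      Relation.ReflTransGen (fun a b => ∃ A, qa A a b ∨ qa A b a) u v)
    (hbelow : ∀ j : Fin m, Relation.TransGen (fun a b => ∃ A, qa A a b) (y j) x)
    (h1 h2 : Var → V)
    (hh1 : ∀ A u v, qa A u v → edge A (h1 u) (h1 v))
    (hh2 : ∀ A u v, qa A u v → edge A (h2 u) (h2 v))
    (hx : h1 x = h2 x) :
    ∀ j : Fin m, h1 (y j) = h2 (y j) := by
  intro j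
  have key : ∀ v : Var, Relation.TransGen (fun a b => ∃ A, qa A a b) v x →
      h1 v = h2 v := by
    intro v hv
    induction hv using Relation.TransGen.head_induction_on with
    | single h =>
      obtain ⟨A, hA⟩ := h
      exact huniq A (h1 x) _ _ (hh1 A _ _ hA) (hx ▸ hh2 A _ _ hA)
    | head h _ ih =>
      obtain ⟨A, hA⟩ := h
      exact huniq A (h1 _) _ _ (hh1 A _ _ hA) (ih ▸ hh2 A _ _ hA)
  exact key (y j) (hbelow j)
end
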